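/- On a pseudo-Euclidean space (ℝ^{n+2}, Q) with Q of signature (n+1,1), for a null vector p ≠ 0, the quotient ⟨p⟩^⊥ / ⟨p⟩ carries a well-defined bilinear form induced by Q, and this induced form is positive definite. -/

import Mathlib

/-!
Write `Q(x,x) = 2 x₀ x_{n+1} + ∑ xᵢ²`. A nonzero null vector `p` has `p₀ ≠ 0` or `p_{n+1} ≠ 0`,
and swapping these two coordinates is an isometry, so we may assume `p_{n+1} ≠ 0`. Moving
`z ⊥ p` along `p` to kill its last coordinate does not change `Q(z,z)`, which then becomes a
sum of squares of the middle coordinates; if these vanish, orthogonality to `p` forces the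
first coordinate to vanish too, so `z` lies on the line through `p`.
-/

/-- The bilinear form `Q(x,y) = x₀ y_{n+1} + x_{n+1} y₀ + x₁y₁ + ⋯ + xₙyₙ`
of signature `(n+1,1)` on `ℝ^{n+2}`. -/
def Qform (n : ℕ) (x y : Fin (n + 2) → ℝ) : ℝ :=
  x 0 * y (Fin.last (n + 1)) + x (Fin.last (n + 1)) * y 0
    + ∑ i : Fin n, x i.succ.castSucc * y i.succ.castSucc

section

variable {n : ℕ}

lemma Qform_comm (x y : Fin (n + 2) → ℝ) : Qform n x y = Qform n y x := by
  simp only [Qform, mul_comm (x _) (y _)]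
  ring

lemma Qform_add_left (x x' y : Fin (n + 2) → ℝ) :
    Qform n (x + x') y = Qform n x y + Qform n x' y := by
  simp only [Qform, Pi.add_apply, add_mul, Finset.sum_add_distrib]
  ring

lemma Qform_smul_left (c : ℝ) (x y : Fin (n + 2) → ℝ) :
    Qform n (c • x) y = c * Qform n x y := by
  simp only [Qform, Pi.smul_apply, smul_eq_mul, mul_assoc, ← Finset.mul_sum]
  ring

lemma Qform_add_right (x y y' : Fin (n + 2) → ℝ) :
    Qform n x (y + y') = Qform n x y + Qform n x y' := by
  rw [Qform_comm, Qform_add_left, Qform_comm y, Qform_comm y']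

lemma Qform_smul_right (c : ℝ) (x y : Fin (n + 2) → ℝ) :
    Qform n x (c • y) = c * Qform n x y := by
  rw [Qform_comm, Qform_smul_left, Qform_comm y]

lemma Qform_add_smul_add_smul {p z w : Fin (n + 2) → ℝ} (hnull : Qform n p p = 0)
    (hz : Qform n z p = 0) (hw : Qform n w p = 0) (c d : ℝ) :
    Qform n (z + c • p) (w + d • p) = Qform n z w := by
  simp only [Qform_add_left, Qform_add_right, Qform_smul_left, Qform_smul_right, hnull, hz,
    Qform_comm p w, hw]
  ring

lemma Qform_self (x : Fin (n + 2) → ℝ) :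
    Qform n x x = 2 * x 0 * x (Fin.last (n + 1)) + ∑ i : Fin n, x i.succ.castSucc ^ 2 := by
  simp only [Qform, sq]
  ring

lemma Qform_comp_swap (x y : Fin (n + 2) → ℝ) :
    Qform n (x ∘ Equiv.swap 0 (Fin.last (n + 1))) (y ∘ Equiv.swap 0 (Fin.last (n + 1))) =
      Qform n x y := by
  have hmid (i : Fin n) : Equiv.swap 0 (Fin.last (n + 1)) i.succ.castSucc = i.succ.castSucc :=
    Equiv.swap_apply_of_ne_of_ne (Fin.castSucc_ne_zero_iff.mpr i.succ_ne_zero)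
      (Fin.castSucc_lt_last _).ne
  simp only [Qform, Function.comp_apply, Equiv.swap_apply_left, Equiv.swap_apply_right, hmid]
  ring

lemma Fin.funext_zero_last_succ_castSucc {α : Type*} {f g : Fin (n + 2) → α}
    (h0 : f 0 = g 0) (hlast : f (Fin.last (n + 1)) = g (Fin.last (n + 1)))
    (hmid : ∀ i : Fin n, f i.succ.castSucc = g i.succ.castSucc) : f = g := by
  funext j
  induction j using Fin.lastCases with
  | last => exact hlast
  | cast k =>
    induction k using Fin.cases with
    | zero => exact h0
    | succ i => exact hmid i

lemma sum_sq_eq_zero_iff {x : Fin n → ℝ} : ∑ i, x i ^ 2 = 0 ↔ ∀ i, x i = 0 := by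
  simp [Finset.sum_eq_zero_iff_of_nonneg fun i _ => sq_nonneg (x i)]

lemma fst_ne_zero_or_last_ne_zero_of_Qform_self_eq_zero {p : Fin (n + 2) → ℝ} (hp : p ≠ 0)
    (hnull : Qform n p p = 0) : p 0 ≠ 0 ∨ p (Fin.last (n + 1)) ≠ 0 := by
  by_contra! h
  have hmid : ∀ i : Fin n, p i.succ.castSucc = 0 := by
    rw [Qform_self, h.1, h.2] at hnull
    simpa [sum_sq_eq_zero_iff] using hnull
  exact hp (Fin.funext_zero_last_succ_castSucc h.1 h.2 hmid)

lemma Qform_self_nonneg_and_eq_smul_of_last_ne_zero {p z : Fin (n + 2) → ℝ}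
    (hlast : p (Fin.last (n + 1)) ≠ 0) (hnull : Qform n p p = 0) (hz : Qform n z p = 0) :
    0 ≤ Qform n z z ∧ (Qform n z z = 0 → ∃ c : ℝ, z = c • p) := by
  set c := z (Fin.last (n + 1)) / p (Fin.last (n + 1))
  set w := z + (-c) • p with hw
  have hw_last : w (Fin.last (n + 1)) = 0 := by
    simp only [hw, c, Pi.add_apply, Pi.smul_apply, smul_eq_mul]
    field_simp
    ring
  have hwp : Qform n w p = 0 := by
    rw [hw, Qform_add_left, Qform_smul_left, hz, hnull, mul_zero, add_zero]
  have hzz : Qform n z z = ∑ i : Fin n, w i.succ.castSucc ^ 2 := by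
    rw [← Qform_add_smul_add_smul hnull hz hz (-c) (-c), ← hw, Qform_self, hw_last]
    ring
  refine ⟨hzz ▸ Finset.sum_nonneg fun i _ => sq_nonneg _, fun hzero => ⟨c, ?_⟩⟩
  have hw_mid : ∀ i : Fin n, w i.succ.castSucc = 0 := sum_sq_eq_zero_iff.mp (hzz ▸ hzero)
  have hw_fst : w 0 = 0 := by
    simp only [Qform, hw_last, hw_mid] at hwp
    simpa [hlast] using hwp
  have hw_zero : w = 0 := Fin.funext_zero_last_succ_castSucc hw_fst hw_last hw_mid
  rw [hw, neg_smul, ← sub_eq_add_neg, sub_eq_zero] at hw_zero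
  exact hw_zero

end

/-- For a nonzero null vector `p`, the form induced by `Q` on `⟨p⟩^⊥ / ⟨p⟩` is
well defined (independent of representatives modulo `⟨p⟩`) and positive definite. -/
theorem induced_form_positive_definite (n : ℕ) (p : Fin (n + 2) → ℝ)
    (hp : p ≠ 0) (hnull : Qform n p p = 0) :
    (∀ z w : Fin (n + 2) → ℝ, Qform n z p = 0 → Qform n w p = 0 →
      ∀ c d : ℝ, Qform n (z + c • p) (w + d • p) = Qform n z w) ∧
    (∀ z : Fin (n + 2) → ℝ, Qform n z p = 0 →
      0 ≤ Qform n z z ∧ (Qform n z z = 0 → ∃ c : ℝ, z = c • p)) := by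
  refine ⟨fun z w hz hw c d => Qform_add_smul_add_smul hnull hz hw c d, fun z hz => ?_⟩
  rcases fst_ne_zero_or_last_ne_zero_of_Qform_self_eq_zero hp hnull with hfst | hlast
  · set σ := Equiv.swap (0 : Fin (n + 2)) (Fin.last (n + 1))
    have key := Qform_self_nonneg_and_eq_smul_of_last_ne_zero (p := p ∘ σ) (z := z ∘ σ)
      (by simpa [σ] using hfst) (by rwa [Qform_comp_swap]) (by rwa [Qform_comp_swap])
    rw [Qform_comp_swap] at key
    refine ⟨key.1, fun hzero => ?_⟩
    obtain ⟨c, hc⟩ := key.2 hzero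
    refine ⟨c, ?_⟩
    funext j
    simpa [σ] using congrFun hc (σ j)
  · exact Qform_self_nonneg_and_eq_smul_of_last_ne_zero hlast hnull hz
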